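/- arXiv:math/0503140 — 5 statements merged into one kernel-verified Lean document; each statement's English description precedes it below -/
import Mathlib

section
/- Let G be a group and H a subgroup. A map p : G → H satisfying p(h) = h for all h ∈ H and p(h₁ g h₂) = h₁ p(g) h₂ for all h₁, h₂ ∈ H, g ∈ G exists if and only if there exists a subset K ⊆ G such that (a) K is invariant under conjugation by elements of H, and (b) K intersects each left coset of H in exactly one element. -/
/-- A virtual projection `p : G → H` exists iff there is a subset `K ⊆ G`
invariant under conjugation by `H` meeting each left coset of `H` in exactly one element. -/
theorem virtual_projection_exists_iff {G : Type*} [Group G] (H : Subgroup G) :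
    (∃ p : G → G, (∀ g : G, p g ∈ H) ∧ (∀ h ∈ H, p h = h) ∧
      ∀ h₁ ∈ H, ∀ h₂ ∈ H, ∀ g : G, p (h₁ * g * h₂) = h₁ * p g * h₂) ↔
    (∃ K : Set G, (∀ h ∈ H, ∀ k ∈ K, h * k * h⁻¹ ∈ K) ∧
      ∀ g : G, ∃! k : G, k ∈ K ∧ ∃ h ∈ H, g = h * k) := by
  constructor
  · rintro ⟨p, hmem, hid, hequi⟩
    refine ⟨{g | p g = 1}, ?_, ?_⟩
    · intro h hh k hk
      have := hequi h hh h⁻¹ (H.inv_mem hh) k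
      simp only [Set.mem_setOf_eq] at hk ⊢
      rw [this, hk, mul_one, mul_inv_cancel]
    · intro g
      have key : ∀ g : G, p ((p g)⁻¹ * g) = 1 := by
        intro g
        have := hequi (p g)⁻¹ (H.inv_mem (hmem g)) 1 H.one_mem g
        simp only [mul_one] at this
        rw [this, inv_mul_cancel]
      refine ⟨(p g)⁻¹ * g, ⟨key g, p g, hmem g, by group⟩, ?_⟩
      rintro k' ⟨hk', h', hh', rfl⟩
      have hp : p (h' * k') = h' := by
        have := hequi h' hh' 1 H.one_mem k'
        simp only [mul_one] at this
        rw [this, hk', mul_one]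
      rw [hp]; group
  · rintro ⟨K, hinv, huniq⟩
    classical
    obtain ⟨k0, ⟨hk0K, h0, hh0, h10⟩, _⟩ := huniq 1
    have hk0H : k0 ∈ H := by
      have : k0 = h0⁻¹ := by
        calc k0 = h0⁻¹ * (h0 * k0) := by group
          _ = h0⁻¹ := by rw [← h10]; group
      rw [this]; exact H.inv_mem hh0
    -- k0 is central in H
    have hcent : ∀ h ∈ H, h * k0 = k0 * h := by
      intro h hh
      obtain ⟨k, _, hku⟩ := huniq k0
      have u1 : k0 = k := hku k0 ⟨hk0K, 1, H.one_mem, (one_mul k0).symm⟩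
      have u2 : h * k0 * h⁻¹ = k := by
        refine hku _ ⟨hinv h hh k0 hk0K, k0 * h * k0⁻¹ * h⁻¹, ?_, by group⟩
        exact H.mul_mem (H.mul_mem (H.mul_mem hk0H hh) (H.inv_mem hk0H)) (H.inv_mem hh)
      have : h * k0 * h⁻¹ = k0 := by rw [u2, ← u1]
      calc h * k0 = (h * k0 * h⁻¹) * h := by group
        _ = k0 * h := by rw [this]
    set kf : G → G := fun g => Classical.choose (huniq g) with hkf
    have hspec : ∀ g : G, (kf g ∈ K ∧ ∃ h ∈ H, g = h * kf g) ∧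
        ∀ y, (y ∈ K ∧ ∃ h ∈ H, g = h * y) → y = kf g :=
      fun g => Classical.choose_spec (huniq g)
    have hHpart : ∀ g : G, g * (kf g)⁻¹ ∈ H := by
      intro g
      obtain ⟨h, hh, hg⟩ := (hspec g).1.2
      have : g * (kf g)⁻¹ = h := by rw [mul_inv_eq_iff_eq_mul]; exact hg
      rw [this]; exact hh
    refine ⟨fun g => g * (kf g)⁻¹ * k0, fun g => H.mul_mem (hHpart g) hk0H, ?_, ?_⟩
    · intro h hh
      have : k0 = kf h := by
        refine (hspec h).2 k0 ⟨hk0K, h * k0⁻¹, H.mul_mem hh (H.inv_mem hk0H), by group⟩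
      show h * (kf h)⁻¹ * k0 = h
      rw [← this]; group
    · intro h₁ hh₁ h₂ hh₂ g
      have hkk : kf (h₁ * g * h₂) = h₂⁻¹ * kf g * h₂ := by
        refine ((hspec (h₁ * g * h₂)).2 _ ?_).symm
        constructor
        · have := hinv h₂⁻¹ (H.inv_mem hh₂) (kf g) (hspec g).1.1
          simpa using this
        · refine ⟨h₁ * (g * (kf g)⁻¹) * h₂, H.mul_mem (H.mul_mem hh₁ (hHpart g)) hh₂, by group⟩
      show h₁ * g * h₂ * (kf (h₁ * g * h₂))⁻¹ * k0 = h₁ * (g * (kf g)⁻¹ * k0) * h₂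
      rw [hkk]
      have : h₁ * g * h₂ * (h₂⁻¹ * kf g * h₂)⁻¹ * k0 = h₁ * (g * (kf g)⁻¹) * (h₂ * k0) := by
        group
      rw [this, hcent h₂ hh₂]
      group
end

section
/- Let p : G → H be a virtual projection and K = p⁻¹(e). Then every element k ∈ K lies in the center of the group H ∩ k⁻¹Hk, i.e., k commutes with every element of H ∩ k⁻¹Hk. -/
/-- Vinberg's observation: every `k ∈ K = p⁻¹(e)` commutes with every
element of `H ∩ k⁻¹Hk`. -/
theorem ker_virtual_projection_central {G : Type*} [Group G] (H : Subgroup G)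
    (p : G → G) (hmem : ∀ g : G, p g ∈ H) (hfix : ∀ h ∈ H, p h = h)
    (hcov : ∀ h₁ ∈ H, ∀ h₂ ∈ H, ∀ g : G, p (h₁ * g * h₂) = h₁ * p g * h₂) :
    ∀ k : G, p k = 1 → ∀ x : G, x ∈ H → k * x * k⁻¹ ∈ H → k * x = x * k := by
  intro k hk x hx hkx
  have h1 : p (1 * k * x) = 1 * p k * x := hcov 1 H.one_mem x hx k
  have h2 : p ((k * x * k⁻¹) * k * 1) = (k * x * k⁻¹) * p k * 1 := hcov _ hkx 1 H.one_mem k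
  simp only [one_mul, mul_one, hk] at h1 h2
  rw [show k * x * k⁻¹ * k = k * x by group] at h2
  have e : k * x * k⁻¹ = x := h2.symm.trans h1
  rw [mul_inv_eq_iff_eq_mul] at e
  exact e
end

section
/- For n > 4, the virtual projection S_n → S_{n-1} is unique; equivalently, the only subset K of S_n that is invariant under conjugation by S_{n-1} and meets every left coset of S_{n-1} in exactly one element is K = {e} ∪ {(i n) : 1 ≤ i ≤ n-1}. -/
/-!
If `K` is a transversal of a subgroup `H` that is stable under conjugation by `H`, then any
`h ∈ H` with `k h k⁻¹ ∈ H` fixes `k ∈ K` under conjugation, since `h k h⁻¹ ∈ K` lies in the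
coset `H k`. For `H` the stabilizer of a point `a` in `Perm α`, this says that `σ ∈ K` commutes
with every permutation fixing both `a` and `b := σ⁻¹ a`. With at least five points such a
permutation can move `σ x` to a fifth point `z` while fixing `x`, unless `σ x = x` or
`σ x ∈ {a, b}`; hence `σ = swap b a`. Every `b` arises, as the representative of the coset of
`swap b a`.
-/

open Equiv MulAction

section Transversal

variable {G : Type*} [Group G] {H : Subgroup G} {K : Set G}

theorem eq_of_mul_inv_mem_of_existsUnique
    (htrans : ∀ g : G, ∃! k : G, k ∈ K ∧ ∃ h ∈ H, g = h * k)
    {k k' : G} (hk : k ∈ K) (hk' : k' ∈ K) (hkk' : k * k'⁻¹ ∈ H) : k = k' :=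
  (htrans k).unique ⟨hk, 1, H.one_mem, (one_mul k).symm⟩ ⟨hk', k * k'⁻¹, hkk', by group⟩

theorem commute_of_mul_mul_inv_mem (hinv : ∀ h ∈ H, ∀ k ∈ K, h * k * h⁻¹ ∈ K)
    (htrans : ∀ g : G, ∃! k : G, k ∈ K ∧ ∃ h ∈ H, g = h * k)
    {h k : G} (hh : h ∈ H) (hk : k ∈ K) (hkh : k * h * k⁻¹ ∈ H) : Commute h k := by
  have hcoset : h * k * h⁻¹ * k⁻¹ ∈ H := by
    rw [show h * k * h⁻¹ * k⁻¹ = h * (k * h * k⁻¹)⁻¹ by group]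
    exact H.mul_mem hh (H.inv_mem hkh)
  exact mul_inv_eq_iff_eq_mul.mp
    (eq_of_mul_inv_mem_of_existsUnique htrans (hinv h hh k hk) hk hcoset)

end Transversal

section Stabilizer

variable {G α : Type*} [Group G] [MulAction G α] {a : α} {K : Set G}

theorem exists_mem_inv_smul_eq_of_existsUnique
    (htrans : ∀ g : G, ∃! k : G, k ∈ K ∧ ∃ h ∈ stabilizer G a, g = h * k) (g : G) :
    ∃ k ∈ K, k⁻¹ • a = g⁻¹ • a := by
  obtain ⟨k, ⟨hk, h, hh, rfl⟩, -⟩ := htrans g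
  refine ⟨k, hk, ?_⟩
  rw [mul_inv_rev, mul_smul, inv_smul_eq_iff.mpr (mem_stabilizer_iff.mp hh).symm]

theorem commute_of_smul_inv_smul_eq (hinv : ∀ h ∈ stabilizer G a, ∀ k ∈ K, h * k * h⁻¹ ∈ K)
    (htrans : ∀ g : G, ∃! k : G, k ∈ K ∧ ∃ h ∈ stabilizer G a, g = h * k)
    {h k : G} (hh : h ∈ stabilizer G a) (hk : k ∈ K) (hfix : h • k⁻¹ • a = k⁻¹ • a) :
    Commute h k :=
  commute_of_mul_mul_inv_mem hinv htrans hh hk <| by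
    rw [mem_stabilizer_iff, mul_smul, mul_smul, hfix, smul_inv_smul]

end Stabilizer

theorem Fintype.exists_ne_of_four_lt_card {α : Type*} [Fintype α] (hα : 4 < Fintype.card α)
    (p q r s : α) :
    ∃ z, z ≠ p ∧ z ≠ q ∧ z ≠ r ∧ z ≠ s := by
  classical
  obtain ⟨z, -, hz⟩ := Finset.exists_mem_notMem_of_card_lt_card
    (Finset.card_le_four.trans_lt (hα.trans_eq (Finset.card_univ (α := α)).symm))
  exact ⟨z, by simpa [not_or] using hz⟩

namespace Equiv.Perm

variable {α : Type*} [DecidableEq α]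

theorem apply_eq_self_of_commute_swap {σ : Perm α} {x z : α} (hzx : z ≠ x) (hzσ : z ≠ σ x)
    (h : Commute σ (swap (σ x) z)) : σ x = x := by
  by_contra hne
  have hx := congr($h x)
  simp only [mul_apply, swap_apply_of_ne_of_ne (Ne.symm hne) hzx.symm, swap_apply_left] at hx
  exact hzσ hx.symm

theorem range_swap_eq_setOf (a : α) :
    (Set.range fun b => swap b a) = {σ : Perm α | σ = 1 ∨ ∃ b, b ≠ a ∧ σ = swap b a} := by
  ext σ
  constructor
  · rintro ⟨b, rfl⟩
    by_cases hb : b = a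
    · exact Or.inl (by simp only [hb, swap_self, ← Perm.one_def])
    · exact Or.inr ⟨b, hb, rfl⟩
  · rintro (rfl | ⟨b, -, rfl⟩)
    · exact ⟨a, by simp only [swap_self, ← Perm.one_def]⟩
    · exact ⟨b, rfl⟩

variable [Fintype α]

theorem apply_eq_self_of_forall_commute (hα : 4 < Fintype.card α) {σ : Perm α} {a b : α}
    (hσ : ∀ τ : Perm α, τ a = a → τ b = b → Commute σ τ) {x : α} (ha : σ x ≠ a)
    (hb : σ x ≠ b) : σ x = x := by
  obtain ⟨z, hzx, hzσ, hza, hzb⟩ := Fintype.exists_ne_of_four_lt_card hα x (σ x) a b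
  exact apply_eq_self_of_commute_swap hzx hzσ <| hσ _
    (swap_apply_of_ne_of_ne ha.symm hza.symm) (swap_apply_of_ne_of_ne hb.symm hzb.symm)

theorem eq_swap_of_forall_commute (hα : 4 < Fintype.card α) {σ : Perm α} {a b : α}
    (hσ : ∀ τ : Perm α, τ a = a → τ b = b → Commute σ τ) (hba : σ b = a) :
    σ = swap b a := by
  have hab : σ a = b := by
    by_contra hne
    have hσa : σ a ≠ a := fun h => hne (h.trans (σ.injective (h.trans hba.symm)))
    exact hσa (apply_eq_self_of_forall_commute hα hσ hσa hne)
  ext x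
  by_cases hxb : x = b
  · rw [hxb, hba, swap_apply_left]
  by_cases hxa : x = a
  · rw [hxa, hab, swap_apply_right]
  rw [swap_apply_of_ne_of_ne hxb hxa]
  exact apply_eq_self_of_forall_commute hα hσ (fun h => hxb (σ.injective (h.trans hba.symm)))
    (fun h => hxa (σ.injective (h.trans hab.symm)))

theorem eq_range_swap_of_transversal_stabilizer (hα : 4 < Fintype.card α) {a : α}
    {K : Set (Perm α)}
    (hinv : ∀ h ∈ stabilizer (Perm α) a, ∀ k ∈ K, h * k * h⁻¹ ∈ K)
    (htrans : ∀ g : Perm α, ∃! k : Perm α, k ∈ K ∧ ∃ h ∈ stabilizer (Perm α) a, g = h * k) :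
    K = Set.range fun b => swap b a := by
  have hK : ∀ σ ∈ K, σ = swap (σ⁻¹ a) a := fun σ hσ =>
    eq_swap_of_forall_commute hα
      (fun τ hτa hτb => (commute_of_smul_inv_smul_eq hinv htrans hτa hσ hτb).symm)
      (σ.apply_symm_apply a)
  ext σ
  refine ⟨fun hσ => ⟨_, (hK σ hσ).symm⟩, ?_⟩
  rintro ⟨b, rfl⟩
  obtain ⟨k, hk, hkb⟩ := exists_mem_inv_smul_eq_of_existsUnique htrans (swap b a)
  have hkb' : k⁻¹ a = b := by simpa using hkb
  rwa [hK k hk, hkb'] at hk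

end Equiv.Perm

/-- For `n + 1 > 4`, the only subset `K` of `S_{n+1}` invariant under
conjugation by `S_n` (the stabilizer of the last point) and meeting every left coset of
`S_n` in exactly one element is `{1} ∪ {(i, last) : i ≠ last}`; equivalently, the virtual
projection `S_{n+1} → S_n` is unique. -/
theorem virtual_projection_symm_unique (n : ℕ) (hn : 4 < n + 1)
    (K : Set (Equiv.Perm (Fin (n + 1))))
    (hinv : ∀ h ∈ MulAction.stabilizer (Equiv.Perm (Fin (n + 1))) (Fin.last n),
      ∀ k ∈ K, h * k * h⁻¹ ∈ K)
    (htrans : ∀ g : Equiv.Perm (Fin (n + 1)), ∃! k : Equiv.Perm (Fin (n + 1)),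
      k ∈ K ∧ ∃ h ∈ MulAction.stabilizer (Equiv.Perm (Fin (n + 1))) (Fin.last n),
        g = h * k) :
    K = {σ : Equiv.Perm (Fin (n + 1)) |
      σ = 1 ∨ ∃ i : Fin (n + 1), i ≠ Fin.last n ∧ σ = Equiv.swap i (Fin.last n)} := by
  rw [← Perm.range_swap_eq_setOf]
  exact Perm.eq_range_swap_of_transversal_stabilizer (by simpa using hn) hinv htrans
end

section
/- Let A be a finite-dimensional semisimple algebra with chain of semisimple subalgebras A₀ = ℂ ⊆ A₁ ⊆ … ⊆ A_n = A, and suppose every irreducible A_k-module restricts to A_{k-1} multiplicity-freely. Then the Gelfand–Tsetlin algebra GZ_n, generated by the centers Z(A₁), …, Z(A_n), is a maximal commutative subalgebra of A_n. -/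
/-!
By induction along the chain, `GZ_k` contains a complete family of orthogonal idempotents
`pᵢ ∈ A_k` with one-dimensional corners `pᵢ A_k pᵢ = ℂ pᵢ`; the family for `A_{k+1}` consists of
the products `pᵢ zⱼ` with the central idempotents `zⱼ` cutting out the isotypic components of
`A_{k+1}`. Indeed `A_k pᵢ` is a simple `A_k`-module, so by multiplicity-freeness `pᵢ` fixes at
most a line in a simple `A_{k+1}`-module `S`; hence `pᵢ b pᵢ` acts on `S` as a scalar, and since
`A_{k+1} zⱼ` is a sum of copies of `S`, on which it acts faithfully, `pᵢ zⱼ b pᵢ zⱼ ∈ ℂ pᵢ zⱼ`.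
For `k = n`, an element `x` commuting with `GZ_n` is `∑ pᵢ x pᵢ ∈ span {pᵢ} ⊆ GZ_n`, and `GZ_n`
is commutative since the centres of nested algebras commute.
-/

open Submodule

universe u

def HasScalarCorner (K : Type*) {R : Type*} [Field K] [Ring R] [Algebra K R] (p : R) : Prop :=
  ∀ r : R, ∃ c : K, p * r * p = c • p

def IsMultiplicityFree (R M : Type*) [Ring R] [AddCommGroup M] [Module R M] : Prop :=
  ∀ N₁ N₂ : Submodule R M, IsSimpleModule R N₁ → IsSimpleModule R N₂ →
    Nonempty (N₁ ≃ₗ[R] N₂) → N₁ = N₂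

namespace CompleteOrthogonalIdempotents

variable {R ι κ : Type*} [Ring R] [Fintype ι] [Fintype κ] {e : ι → R} {f : κ → R}

theorem mul_of_commute (he : CompleteOrthogonalIdempotents e)
    (hf : CompleteOrthogonalIdempotents f) (hef : ∀ i j, Commute (e i) (f j)) :
    CompleteOrthogonalIdempotents fun x : ι × κ ↦ e x.1 * f x.2 where
  idem x := by
    rw [IsIdempotentElem, (hef x.1 x.2).symm.mul_mul_mul_comm, (he.idem _).eq, (hf.idem _).eq]
  ortho x y hxy := by
    dsimp only
    rw [(hef y.1 x.2).symm.mul_mul_mul_comm]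
    by_cases h : x.1 = y.1
    · rw [hf.ortho fun h' ↦ hxy (Prod.ext h h'), mul_zero]
    · rw [he.ortho h, zero_mul]
  complete := by
    rw [Fintype.sum_prod_type, ← Finset.sum_mul_sum, he.complete, hf.complete, one_mul]

theorem commute_of_mul_mul_self (he : CompleteOrthogonalIdempotents e)
    (h : ∀ i r, e i * r * e i = e i * r) (i : ι) (r : R) : Commute (e i) r := by
  classical
  calc e i * r = e i * r * e i := (h i r).symm
    _ = ∑ j, e j * r * e i := Eq.symm <| Finset.sum_eq_single i
        (fun j _ hji ↦ by rw [← h j, mul_assoc _ (e j), he.ortho hji, mul_zero]) (by simp)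
    _ = r * e i := by rw [← Finset.sum_mul, ← Finset.sum_mul, he.complete, one_mul]

theorem mem_of_forall_commute {K A : Type*} [Field K] [Ring A] [Algebra K A] {p : ι → A}
    (hp : CompleteOrthogonalIdempotents p) (hpc : ∀ i, HasScalarCorner K (p i))
    {C : Subalgebra K A} (hpC : ∀ i, p i ∈ C) {x : A} (hx : ∀ i, Commute x (p i)) : x ∈ C := by
  classical
  have hdiag : x = ∑ i, p i * x * p i := calc
    x = (∑ i, p i) * x * ∑ j, p j := by rw [hp.complete, one_mul, mul_one]
    _ = ∑ i, ∑ j, p i * x * p j := by rw [Finset.sum_mul, Finset.sum_mul_sum]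
    _ = ∑ i, p i * x * p i := Finset.sum_congr rfl fun i _ ↦ Finset.sum_eq_single i
        (fun j _ hji ↦ by rw [mul_assoc, (hx j).eq, ← mul_assoc, hp.ortho hji.symm, zero_mul])
        (by simp)
  rw [hdiag]
  refine sum_mem fun i _ ↦ ?_
  obtain ⟨c, hc⟩ := hpc i x
  exact hc ▸ C.smul_mem (hpC i) c

end CompleteOrthogonalIdempotents

theorem IsSemisimpleRing.exists_completeOrthogonalIdempotents_isIsotypic (B : Type u) [Ring B]
    [IsSemisimpleRing B] :
    ∃ (ι : Type u) (_ : Fintype ι) (z : ι → B), CompleteOrthogonalIdempotents z ∧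
      (∀ i b, Commute (z i) b) ∧ ∀ i, IsIsotypic B (span B {z i}) := by
  classical
  have := Fintype.ofFinite (isotypicComponents B B)
  let V : isotypicComponents B B → Ideal B := Subtype.val
  have hV : DirectSum.IsInternal V :=
    DirectSum.isInternal_submodule_of_iSupIndep_of_iSup_eq_top
      ((sSupIndep_iff _).mp (sSupIndep_isotypicComponents B B))
      ((sSup_eq_iSup' _).symm.trans (sSup_isotypicComponents B B))
  let := hV.chooseDecomposition
  have hz := DirectSum.completeOrthogonalIdempotents_idempotent V
  set z := DirectSum.idempotent V
  have hmem (c) {x : B} (hx : x ∈ V c) : x * z c = x := by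
    rw [← DirectSum.decompose_eq_mul_idempotent, DirectSum.decompose_of_mem_same V hx]
  have hzV (c) : z c ∈ V c := (DirectSum.decompose V 1 c).2
  have hspan (c) : span B {z c} = V c :=
    le_antisymm ((span_singleton_le_iff_mem _ _).mpr (hzV c))
      fun x hx ↦ mem_span_singleton.mpr ⟨x, hmem c hx⟩
  have htwo (c) : (V c).IsTwoSided :=
    isFullyInvariant_iff_isTwoSided.mp (.of_mem_isotypicComponents c.2)
  refine ⟨_, inferInstance, z, hz, hz.commute_of_mul_mul_self fun c r ↦ ?_, fun c ↦ ?_⟩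
  · exact hmem c (Ideal.mul_mem_right r _ (hzV c))
  · rw [hspan]
    exact .isotypicComponents c.2

section ScalarCorner

variable {K R : Type*} [Field K] [Ring R] [Algebra K R]

theorem HasScalarCorner.map {B : Type*} [Ring B] [Algebra K B] {p : R} (h : HasScalarCorner K p)
    (f : R →ₐ[K] B) (hf : Function.Surjective f) : HasScalarCorner K (f p) := by
  intro b
  obtain ⟨r, rfl⟩ := hf b
  obtain ⟨c, hc⟩ := h r
  exact ⟨c, by rw [← map_mul, ← map_mul, hc, map_smul]⟩

theorem isSimpleModule_span_of_hasScalarCorner [IsSemisimpleRing R] {p : R}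
    (hp : IsIdempotentElem p) (hp0 : p ≠ 0) (hc : HasScalarCorner K p) :
    IsSimpleModule R (span R {p}) := by
  rw [isSimpleModule_iff_isAtom]
  refine ⟨by simpa using hp0, fun W hW ↦ ?_⟩
  obtain ⟨W', hW'⟩ := exists_isCompl W
  obtain ⟨w, hw, w', hw', hsum⟩ := mem_sup.mp (hW'.codisjoint.eq_top ▸ mem_top : p ∈ W ⊔ W')
  -- `p * w + p * w' = p * p = p` is a second splitting of `p` along `W ⊕ W'`
  have hpw : p * w = w := by
    have hsplit : p * w - w = w' - p * w' := by
      rw [sub_eq_sub_iff_add_eq_add, ← mul_add, hsum, hp.eq, add_comm, hsum]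
    have hboth : p * w - w ∈ W ⊓ W' :=
      ⟨sub_mem (W.smul_mem p hw) hw, hsplit ▸ sub_mem hw' (W'.smul_mem p hw')⟩
    rwa [hW'.inf_eq_bot, mem_bot, sub_eq_zero] at hboth
  obtain ⟨r, rfl⟩ := mem_span_singleton.mp (hW.le hw)
  obtain ⟨c, hc⟩ := hc r
  have hrc : r • p = c • p := by rw [← hpw, smul_eq_mul, ← mul_assoc, ← hc]
  by_cases hc0 : c = 0
  · rw [hc0, zero_smul] at hrc
    rw [hrc, zero_add] at hsum
    refine eq_bot_iff.mpr fun x hx ↦ ?_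
    have hxW' : x ∈ W' := (span_singleton_le_iff_mem _ _).mpr (hsum ▸ hw') (hW.le hx)
    exact hW'.disjoint.le_bot ⟨hx, hxW'⟩
  · have hpW : p ∈ W := by
      have := W.smul_mem (algebraMap K R c⁻¹) hw
      rwa [hrc, smul_eq_mul, ← Algebra.smul_def, smul_smul, inv_mul_cancel₀ hc0, one_smul] at this
    exact absurd ((span_singleton_le_iff_mem _ _).mpr hpW) hW.not_ge

theorem IsMultiplicityFree.exists_eq_smul_of_smul_eq {M : Type*} [AddCommGroup M] [Module R M]
    (hM : IsMultiplicityFree R M) {p : R} (hc : HasScalarCorner K p)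
    [IsSimpleModule R (span R {p})] {t₁ t₂ : M} (h₁ : p • t₁ = t₁) (h₂ : p • t₂ = t₂)
    (ht₁ : t₁ ≠ 0) : ∃ c : K, t₂ = algebraMap K R c • t₁ := by
  by_cases ht₂ : t₂ = 0
  · exact ⟨0, by simp [ht₂]⟩
  let ψ (t : M) : span R {p} →ₗ[R] M := (LinearMap.toSpanSingleton R M t).domRestrict _
  have hψp (t : M) : ψ t ⟨p, mem_span_singleton_self p⟩ = p • t := rfl
  have hψ (t : M) (ht : t ≠ 0) (hpt : p • t = t) : Function.Injective (ψ t) :=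
    (ψ t).injective_or_eq_zero.resolve_right fun h ↦
      ht (by rw [← hpt, ← hψp, h, LinearMap.zero_apply])
  let e₁ := LinearEquiv.ofInjective _ (hψ t₁ ht₁ h₁)
  let e₂ := LinearEquiv.ofInjective _ (hψ t₂ ht₂ h₂)
  have hrange := hM _ _ (.congr e₁.symm) (.congr e₂.symm) ⟨e₁.symm.trans e₂⟩
  obtain ⟨⟨x, hx⟩, hxt⟩ : t₂ ∈ LinearMap.range (ψ t₁) := hrange ▸ ⟨_, (hψp t₂).trans h₂⟩
  obtain ⟨r, rfl⟩ := mem_span_singleton.mp hx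
  obtain ⟨c, hc⟩ := hc r
  refine ⟨c, ?_⟩
  rw [← h₂, ← hxt]
  change p • (r • p) • t₁ = _
  rw [← mul_smul, smul_eq_mul, ← mul_assoc, hc, Algebra.smul_def, mul_smul, h₁]

theorem exists_forall_corner_smul_eq {B : Type*} [Ring B] [Algebra K B] (φ : R →ₐ[K] B)
    {M : Type*} [AddCommGroup M] [Module R M] [Module B M] [Module K M] [IsScalarTower K B M]
    (hφ : ∀ (r : R) (m : M), r • m = φ r • m) (hM : IsMultiplicityFree R M) {p : R}
    (hp : IsIdempotentElem p) (hpc : HasScalarCorner K p) [IsSimpleModule R (span R {p})] (b : B) :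
    ∃ c : K, ∀ m : M, (φ p * b * φ p) • m = c • φ p • m := by
  have hfix (m : M) : p • φ p • m = φ p • m := by rw [hφ, ← mul_smul, ← map_mul, hp.eq]
  have hK (c : K) (m : M) : algebraMap K R c • m = c • m := by
    rw [hφ, AlgHom.commutes, algebraMap_smul]
  by_cases h : ∀ m : M, φ p • m = 0
  · exact ⟨0, fun m ↦ by simp [mul_smul, h]⟩
  obtain ⟨m₀, hm₀⟩ := not_forall.mp h
  obtain ⟨c, hc⟩ := hM.exists_eq_smul_of_smul_eq hpc (hfix m₀) (hfix (b • φ p • m₀)) hm₀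
  refine ⟨c, fun m ↦ ?_⟩
  obtain ⟨d, hd⟩ := hM.exists_eq_smul_of_smul_eq hpc (hfix m₀) (hfix m) hm₀
  rw [hK] at hc hd
  rw [mul_smul, mul_smul, hd, smul_comm b d, smul_comm (φ p) d, hc, smul_comm d c]

theorem hasScalarCorner_mul_of_isIsotypic [IsSemisimpleRing R] {B : Type u} [Ring B] [Algebra K B]
    [IsSemisimpleRing B] (φ : R →ₐ[K] B)
    (hmf : ∀ (M : Type u) [AddCommGroup M] [Module B M], IsSimpleModule B M →
      letI : Module R M := Module.compHom M φ.toRingHom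
      IsMultiplicityFree R M)
    {p : R} (hp : IsIdempotentElem p) (hpc : HasScalarCorner K p)
    {z : B} (hz : IsIdempotentElem z) (hzc : ∀ b, Commute z b) (hiso : IsIsotypic B (span B {z})) :
    HasScalarCorner K (φ p * z) := by
  intro b
  by_cases hp0 : p = 0
  · exact ⟨0, by simp [hp0]⟩
  by_cases hz0 : z = 0
  · exact ⟨0, by simp [hz0]⟩
  have := isSimpleModule_span_of_hasScalarCorner hp hp0 hpc
  have : Nontrivial (span B {z}) := nontrivial_iff_ne_bot.mpr (by simpa using hz0)
  obtain ⟨n, -, S, -, hS, ⟨e⟩⟩ := hiso.submodule_linearEquiv_fun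
  let : Module R S := Module.compHom S φ.toRingHom
  obtain ⟨c, hcS⟩ := exists_forall_corner_smul_eq φ (fun _ _ ↦ rfl) (hmf S hS) hp hpc b
  set y := φ p * b * φ p - c • φ p
  -- `y` kills `S`, hence every module isomorphic to a power of `S`, such as `B z`
  have hyS (s : S) : y • s = 0 := by rw [sub_smul, hcS s, smul_assoc, sub_self]
  have hyz : y * z = 0 := by
    have hy : y • e.symm (e ⟨z, mem_span_singleton_self z⟩) = 0 := by
      rw [← map_smul, ← e.symm.map_zero]
      exact congrArg e.symm (funext fun i ↦ hyS _)
    simpa using congrArg Subtype.val hy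
  refine ⟨c, ?_⟩
  calc φ p * z * b * (φ p * z) = y * z + c • (φ p * z) := by
        rw [sub_mul, smul_mul_assoc, sub_add_cancel, mul_assoc, mul_assoc, (hzc b).left_comm,
          (hzc (φ p)).left_comm, hz.eq, ← mul_assoc, ← mul_assoc]
    _ = c • (φ p * z) := by rw [hyz, zero_add]

end ScalarCorner

section GelfandTsetlin

variable {K : Type*} {A : Type u} [Field K] [Ring A] [Algebra K A] (Ach : ℕ → Subalgebra K A)

def gelfandTsetlin (n : ℕ) : Subalgebra K A :=
  Algebra.adjoin K (⋃ k ∈ Set.Iic n, {x : A | x ∈ Ach k ∧ ∀ y ∈ Ach k, x * y = y * x})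

theorem gelfandTsetlin_mono : Monotone (gelfandTsetlin Ach) := fun _ _ h ↦
  Algebra.adjoin_mono (Set.biUnion_subset_biUnion_left (Set.Iic_subset_Iic.mpr h))

variable {Ach}

theorem commute_of_mem_gelfandTsetlin (hmono : Monotone Ach) {n : ℕ} {x y : A}
    (hx : x ∈ gelfandTsetlin Ach n) (hy : y ∈ gelfandTsetlin Ach n) : Commute x y := by
  unfold gelfandTsetlin at hx hy
  refine Set.centralizer_centralizer_comm_of_comm ?_ x
    (Algebra.adjoin_le_centralizer_centralizer K _ hx) y
    (Algebra.adjoin_le_centralizer_centralizer K _ hy)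
  simp only [Set.mem_iUnion₂]
  rintro a ⟨j, -, haj, ha⟩ b ⟨k, -, hbk, hb⟩
  rcases le_total j k with h | h
  · exact (hb a (hmono h haj)).symm
  · exact ha b (hmono h hbk)

theorem exists_completeOrthogonalIdempotents_hasScalarCorner (hmono : Monotone Ach)
    (h0 : Ach 0 = ⊥) {n : ℕ} (hss : ∀ k ≤ n, IsSemisimpleRing (Ach k))
    (hmf : ∀ k < n, ∀ (M : Type u) [AddCommGroup M] [Module (Ach (k + 1)) M],
      IsSimpleModule (Ach (k + 1)) M →
      letI : Module (Ach k) M :=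
        Module.compHom M (Subalgebra.inclusion (hmono (Nat.le_succ k))).toRingHom
      IsMultiplicityFree (Ach k) M) :
    ∀ k ≤ n, ∃ (ι : Type u) (_ : Fintype ι) (p : ι → Ach k), CompleteOrthogonalIdempotents p ∧
      (∀ i, HasScalarCorner K (p i)) ∧ ∀ i, (p i : A) ∈ gelfandTsetlin Ach k := by
  intro k
  induction k with
  | zero =>
    refine fun _ ↦ ⟨PUnit, inferInstance, fun _ ↦ 1,
      CompleteOrthogonalIdempotents.unique_iff.mpr rfl, fun _ r ↦ ?_, fun _ ↦ one_mem _⟩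
    obtain ⟨c, hc⟩ := Algebra.mem_bot.mp (h0 ▸ r.2 : (r : A) ∈ (⊥ : Subalgebra K A))
    exact ⟨c, by rw [one_mul, mul_one, Algebra.smul_def, mul_one]; exact Subtype.ext hc.symm⟩
  | succ k ih =>
    intro hk
    obtain ⟨ι, _, p, hp, hpc, hpGZ⟩ := ih (by omega)
    have := hss k (by omega)
    have := hss (k + 1) hk
    obtain ⟨κ, _, z, hz, hzc, hziso⟩ :=
      IsSemisimpleRing.exists_completeOrthogonalIdempotents_isIsotypic (Ach (k + 1))
    let φ := Subalgebra.inclusion (hmono k.le_succ)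
    refine ⟨ι × κ, inferInstance, fun x ↦ φ (p x.1) * z x.2,
      (hp.map φ.toRingHom).mul_of_commute hz fun i j ↦ (hzc j _).symm,
      fun x ↦ hasScalarCorner_mul_of_isIsotypic φ (hmf k hk) (hp.idem _) (hpc _) (hz.idem _)
        (hzc _) (hziso _),
      fun x ↦ mul_mem (gelfandTsetlin_mono Ach k.le_succ (hpGZ x.1)) (Algebra.subset_adjoin ?_)⟩
    exact Set.mem_biUnion Set.self_mem_Iic
      ⟨(z x.2).2, fun y hy ↦ congrArg Subtype.val (hzc x.2 ⟨y, hy⟩).eq⟩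

end GelfandTsetlin

theorem gelfandTsetlin_maximal_commutative_general {A : Type} [Ring A] [Algebra ℂ A]
    (n : ℕ) (Ach : ℕ → Subalgebra ℂ A)
    (hmono : Monotone Ach) (h0 : Ach 0 = ⊥) (htop : Ach n = ⊤)
    (hss : ∀ k ≤ n, IsSemisimpleRing (Ach k))
    (hmf : ∀ k, k < n →
      ∀ (M : Type) [AddCommGroup M] [Module (Ach (k + 1)) M],
        IsSimpleModule (Ach (k + 1)) M →
        letI : Module (Ach k) M :=
          Module.compHom M (Subalgebra.inclusion (hmono (Nat.le_succ k))).toRingHom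
        ∀ N₁ N₂ : Submodule (Ach k) M, IsSimpleModule (Ach k) N₁ →
          IsSimpleModule (Ach k) N₂ → Nonempty (N₁ ≃ₗ[(Ach k)] N₂) → N₁ = N₂) :
    (∀ x ∈ Algebra.adjoin ℂ
        (⋃ k ∈ Set.Iic n, {x : A | x ∈ Ach k ∧ ∀ y ∈ Ach k, x * y = y * x}),
      ∀ y ∈ Algebra.adjoin ℂ
        (⋃ k ∈ Set.Iic n, {x : A | x ∈ Ach k ∧ ∀ y ∈ Ach k, x * y = y * x}),
        x * y = y * x) ∧
    ∀ C : Subalgebra ℂ A, (∀ x ∈ C, ∀ y ∈ C, x * y = y * x) →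
      Algebra.adjoin ℂ
          (⋃ k ∈ Set.Iic n, {x : A | x ∈ Ach k ∧ ∀ y ∈ Ach k, x * y = y * x}) ≤ C →
      C = Algebra.adjoin ℂ
            (⋃ k ∈ Set.Iic n, {x : A | x ∈ Ach k ∧ ∀ y ∈ Ach k, x * y = y * x}) := by
  obtain ⟨ι, _, p, hp, hpc, hpGZ⟩ :=
    exists_completeOrthogonalIdempotents_hasScalarCorner hmono h0 hss hmf n le_rfl
  have hval : Function.Surjective (Ach n).val := fun x ↦ ⟨⟨x, htop ▸ Algebra.mem_top⟩, rfl⟩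
  refine ⟨fun x hx y hy ↦ (commute_of_mem_gelfandTsetlin hmono hx hy).eq,
    fun C hC hGZC ↦ le_antisymm (fun x hx ↦ ?_) hGZC⟩
  exact (hp.map (Ach n).val.toRingHom).mem_of_forall_commute (fun i ↦ (hpc i).map _ hval) hpGZ
    fun i ↦ hC x hx _ (hGZC (hpGZ i))

/-- Given a chain `ℂ = A₀ ⊆ A₁ ⊆ … ⊆ A_n = A` of semisimple subalgebras of
a finite-dimensional algebra `A` with multiplicity-free restrictions, the Gelfand–Tsetlin
algebra `GZ_n` generated by the centers `Z(A₁), …, Z(A_n)` is a maximal commutative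
subalgebra of `A_n = A`. -/
theorem gelfandTsetlin_maximal_commutative {A : Type} [Ring A] [Algebra ℂ A]
    [FiniteDimensional ℂ A] (n : ℕ) (Ach : ℕ → Subalgebra ℂ A)
    (hmono : Monotone Ach) (h0 : Ach 0 = ⊥) (htop : Ach n = ⊤)
    (hss : ∀ k ≤ n, IsSemisimpleRing (Ach k))
    (hmf : ∀ k, k < n →
      ∀ (M : Type) [AddCommGroup M] [Module (Ach (k + 1)) M],
        IsSimpleModule (Ach (k + 1)) M →
        letI : Module (Ach k) M :=
          Module.compHom M (Subalgebra.inclusion (hmono (Nat.le_succ k))).toRingHom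
        ∀ N₁ N₂ : Submodule (Ach k) M, IsSimpleModule (Ach k) N₁ →
          IsSimpleModule (Ach k) N₂ → Nonempty (N₁ ≃ₗ[(Ach k)] N₂) → N₁ = N₂) :
    (∀ x ∈ Algebra.adjoin ℂ
        (⋃ k ∈ Set.Iic n, {x : A | x ∈ Ach k ∧ ∀ y ∈ Ach k, x * y = y * x}),
      ∀ y ∈ Algebra.adjoin ℂ
        (⋃ k ∈ Set.Iic n, {x : A | x ∈ Ach k ∧ ∀ y ∈ Ach k, x * y = y * x}),
        x * y = y * x) ∧
    ∀ C : Subalgebra ℂ A, (∀ x ∈ C, ∀ y ∈ C, x * y = y * x) →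
      Algebra.adjoin ℂ
          (⋃ k ∈ Set.Iic n, {x : A | x ∈ Ach k ∧ ∀ y ∈ Ach k, x * y = y * x}) ≤ C →
      C = Algebra.adjoin ℂ
            (⋃ k ∈ Set.Iic n, {x : A | x ∈ Ach k ∧ ∀ y ∈ Ach k, x * y = y * x}) :=
  gelfandTsetlin_maximal_commutative_general n Ach hmono h0 htop hss hmf
end

section
/- Let {A_n} be an inductive chain of finite-dimensional semisimple algebras with multiplicity-free restrictions, GZ_n the Gelfand–Tsetlin algebras, and P_n : A_n → A_{n-1} generalized expectations. Then P_n(GZ_n) = GZ_{n-1}; in particular the restriction of P_n to GZ_n is a generalized expectation onto GZ_{n-1}. -/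
/-- For an inductive chain `ℂ = A₀ ⊆ … ⊆ A_{n+1}` of finite-dimensional
semisimple algebras with multiplicity-free restrictions and a generalized expectation
`P : A_{n+1} → A_n`, one has `P (GZ_{n+1}) = GZ_n`; in particular the restriction of `P`
to the Gelfand–Tsetlin algebra `GZ_{n+1}` is a generalized expectation onto `GZ_n`. -/
theorem expectation_maps_GZ_onto_GZ {A : Type} [Ring A] [Algebra ℂ A] [StarRing A]
    [FiniteDimensional ℂ A] (n : ℕ) (Ach : ℕ → Subalgebra ℂ A)
    (hmono : Monotone Ach) (h0 : Ach 0 = ⊥) (htop : Ach (n + 1) = ⊤)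
    (hss : ∀ k ≤ n + 1, IsSemisimpleRing (Ach k))
    (hmf : ∀ k, k < n + 1 →
      ∀ (M : Type) [AddCommGroup M] [Module (Ach (k + 1)) M],
        IsSimpleModule (Ach (k + 1)) M →
        letI : Module (Ach k) M :=
          Module.compHom M (Subalgebra.inclusion (hmono (Nat.le_succ k))).toRingHom
        ∀ N₁ N₂ : Submodule (Ach k) M, IsSimpleModule (Ach k) N₁ →
          IsSimpleModule (Ach k) N₂ → Nonempty (N₁ ≃ₗ[(Ach k)] N₂) → N₁ = N₂)
    (P : A →ₗ[ℂ] A)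
    (hrange : ∀ a : A, P a ∈ Ach n)
    (hfix : ∀ b ∈ Ach n, P b = b)
    (hbi : ∀ a : A, ∀ b₁ ∈ Ach n, ∀ b₂ ∈ Ach n, P (b₁ * a * b₂) = b₁ * P a * b₂)
    (hstar : ∀ a : A, P (star a) = star (P a)) :
    P '' (Algebra.adjoin ℂ
        (⋃ k ∈ Set.Iic (n + 1), {x : A | x ∈ Ach k ∧ ∀ y ∈ Ach k, x * y = y * x}) : Set A)
      = (Algebra.adjoin ℂ
        (⋃ k ∈ Set.Iic n, {x : A | x ∈ Ach k ∧ ∀ y ∈ Ach k, x * y = y * x}) : Set A) := by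
  set G : Subalgebra ℂ A := Algebra.adjoin ℂ
      (⋃ k ∈ Set.Iic n, {x : A | x ∈ Ach k ∧ ∀ y ∈ Ach k, x * y = y * x}) with hGdef
  -- every generator of G lies in Ach n
  have hSsub : (⋃ k ∈ Set.Iic n, {x : A | x ∈ Ach k ∧ ∀ y ∈ Ach k, x * y = y * x})
      ⊆ (Ach n : Set A) := by
    intro x hx
    simp only [Set.mem_iUnion, Set.mem_Iic] at hx
    obtain ⟨k, hk, hxk, -⟩ := hx
    exact hmono hk hxk
  have hGA : ∀ x ∈ G, x ∈ Ach n := fun x hx =>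
    Algebra.adjoin_le (S := Ach n) hSsub hx
  have hPfix : ∀ x ∈ G, P x = x := fun x hx => hfix x (hGA x hx)
  -- the span of products (central element) * (element of G)
  set s : Set A := {x : A | ∃ z b : A, (∀ y : A, z * y = y * z) ∧ b ∈ G ∧ x = z * b}
    with hsdef
  set M : Submodule ℂ A := Submodule.span ℂ s with hMdef
  -- M is closed under multiplication
  have hMmul : ∀ x ∈ M, ∀ y ∈ M, x * y ∈ M := by
    have h1 : M * M ≤ M := by
      rw [hMdef, Submodule.span_mul_span]
      apply Submodule.span_le.2
      rintro _ ⟨x, hx, y, hy, rfl⟩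
      obtain ⟨z₁, b₁, hz₁, hb₁, rfl⟩ := hx
      obtain ⟨z₂, b₂, hz₂, hb₂, rfl⟩ := hy
      apply Submodule.subset_span
      refine ⟨z₁ * z₂, b₁ * b₂, ?_, mul_mem hb₁ hb₂, ?_⟩
      · intro y
        rw [mul_assoc, hz₂ y, ← mul_assoc, hz₁ y, mul_assoc]
      · show z₁ * b₁ * (z₂ * b₂) = z₁ * z₂ * (b₁ * b₂)
        rw [mul_assoc z₁ b₁, ← mul_assoc b₁, ← hz₂ b₁, mul_assoc z₂, ← mul_assoc z₁]
    intro x hx y hy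
    exact h1 (Submodule.mul_mem_mul hx hy)
  have hone : (1 : A) ∈ M :=
    Submodule.subset_span ⟨1, 1, fun y => by rw [one_mul, mul_one], one_mem G,
      (one_mul 1).symm⟩
  -- Step 1: GZ_{n+1} ⊆ M
  have step1 : ∀ x ∈ Algebra.adjoin ℂ
      (⋃ k ∈ Set.Iic (n + 1), {x : A | x ∈ Ach k ∧ ∀ y ∈ Ach k, x * y = y * x}),
      x ∈ M := by
    intro x hx
    induction hx using Algebra.adjoin_induction with
    | mem a ha =>
      simp only [Set.mem_iUnion, Set.mem_Iic] at ha
      obtain ⟨k, hk, hak, hacomm⟩ := ha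
      rcases Nat.lt_or_ge k (n + 1) with hkn | hkn
      · -- a is a generator of G
        have haG : a ∈ G := by
          apply Algebra.subset_adjoin
          simp only [Set.mem_iUnion, Set.mem_Iic]
          exact ⟨k, Nat.lt_succ_iff.mp hkn, hak, hacomm⟩
        exact Submodule.subset_span ⟨1, a, fun y => by rw [one_mul, mul_one], haG,
          (one_mul a).symm⟩
      · -- a is central in A
        have hk' : k = n + 1 := le_antisymm hk hkn
        subst hk'
        have hcen : ∀ y : A, a * y = y * a := by
          intro y
          exact hacomm y (by rw [htop]; exact Algebra.mem_top)
        exact Submodule.subset_span ⟨a, 1, hcen, one_mem G, (mul_one a).symm⟩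
    | algebraMap r =>
      have : algebraMap ℂ A r = r • (1 : A) := by
        rw [Algebra.algebraMap_eq_smul_one]
      rw [this]
      exact Submodule.smul_mem M r hone
    | add x y hx hy ihx ihy => exact Submodule.add_mem M ihx ihy
    | mul x y hx hy ihx ihy => exact hMmul x ihx y ihy
  -- Step 2: P maps M into G
  have step2 : ∀ x ∈ M, P x ∈ G := by
    intro x hx
    induction hx using Submodule.span_induction with
    | mem a ha =>
      obtain ⟨z, b, hz, hb, rfl⟩ := ha
      have hbA : b ∈ Ach n := hGA b hb
      have h1 : P (z * b) = P z * b := by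
        have := hbi z 1 (one_mem (Ach n)) b hbA
        rwa [one_mul, one_mul] at this
      rw [h1]
      apply mul_mem _ hb
      -- P z is a generator of G at level n
      apply Algebra.subset_adjoin
      simp only [Set.mem_iUnion, Set.mem_Iic]
      refine ⟨n, le_refl n, hrange z, ?_⟩
      intro y hy
      have e1 : P (z * y) = P z * y := by
        have := hbi z 1 (one_mem (Ach n)) y hy
        rwa [one_mul, one_mul] at this
      have e2 : P (y * z) = y * P z := by
        have := hbi z y hy 1 (one_mem (Ach n))
        rwa [mul_one, mul_one] at this
      rw [← e1, hz y, e2]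
    | zero => rw [map_zero]; exact zero_mem G
    | add x y hx hy ihx ihy => rw [map_add]; exact add_mem ihx ihy
    | smul r x hx ihx => rw [map_smul]; exact Subalgebra.smul_mem G ihx r
  -- conclude
  ext a
  constructor
  · rintro ⟨x, hx, rfl⟩
    exact step2 x (step1 x hx)
  · intro ha
    refine ⟨a, ?_, hPfix a ha⟩
    have hmono' : Algebra.adjoin ℂ
        (⋃ k ∈ Set.Iic n, {x : A | x ∈ Ach k ∧ ∀ y ∈ Ach k, x * y = y * x}) ≤
        Algebra.adjoin ℂ
        (⋃ k ∈ Set.Iic (n + 1), {x : A | x ∈ Ach k ∧ ∀ y ∈ Ach k, x * y = y * x}) := by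
      apply Algebra.adjoin_mono
      apply Set.biUnion_subset_biUnion_left
      intro k hk
      exact le_trans hk (Nat.le_succ n)
    exact hmono' ha
end
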